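/- (Abstract form of Lemma 'tsr help 2'.) Let A, Z, C be seminormal crystals, let u ∈ A, z ∈ Z, and let j_1, …, j_m ∈ I. Suppose that F_{j_1}⋯F_{j_m}({u ⊗ z}) ⊆ {u} ⊗ Z inside A ⊗ Z. Then for every c ∈ C and all d_1, …, d_m ∈ ℤ_{≥0}, the monomial G = f_{j_1}^{d_1} ⋯ f_{j_m}^{d_m} satisfies G(u ⊗ (z ⊗ c)) = u ⊗ G(z ⊗ c) in the tensor product crystal A ⊗ (Z ⊗ C), with the convention u ⊗ 0 := 0. -/

import Mathlib

/-!
Common setup: seminormal crystals over an index type `I` and a weight group `P`,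
with simple roots `α : I → P` and coroot pairings `pair : I → P →+ ℤ`.
We model `B ⊔ {0}` as `Option B` with `0 = none`.
-/

/-- Iterate a partial map `g : B → Option B` (extended by `0 ↦ 0`) `n` times. -/
def optIter {B : Type*} (g : B → Option B) : ℕ → Option B → Option B
  | 0, x => x
  | n + 1, x => (optIter g n x).bind g

/-- A seminormal crystal: a set `B` with weight map `wt : B → P` and partial
crystal operators `e i, f i : B → Option B` (with the convention `0 ↦ 0`),
together with the (finite) string lengths `eps` and `phi`, satisfying the
seminormal crystal axioms. -/
structure SNCrystal (I : Type*) (P : Type*) [AddCommGroup P]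
    (α : I → P) (pair : I → P →+ ℤ) (B : Type*) where
  wt : B → P
  e : I → B → Option B
  f : I → B → Option B
  /-- `eps i b = max {k ≥ 0 ∣ e_i^k b ≠ 0}` (finiteness is the existence of this field). -/
  eps : I → B → ℕ
  /-- `phi i b = max {k ≥ 0 ∣ f_i^k b ≠ 0}` (finiteness is the existence of this field). -/
  phi : I → B → ℕ
  wt_e : ∀ i b b', e i b = some b' → wt b' = wt b + α i
  wt_f : ∀ i b b', f i b = some b' → wt b' = wt b - α i
  eps_spec : ∀ i b, optIter (e i) (eps i b) (some b) ≠ none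
  eps_max : ∀ i b, optIter (e i) (eps i b + 1) (some b) = none
  phi_spec : ∀ i b, optIter (f i) (phi i b) (some b) ≠ none
  phi_max : ∀ i b, optIter (f i) (phi i b + 1) (some b) = none
  pair_wt : ∀ i b, pair i (wt b) = (phi i b : ℤ) - (eps i b : ℤ)
  f_e : ∀ i b b', e i b = some b' → f i b' = some b
  e_f : ∀ i b b', f i b = some b' → e i b' = some b

/-- The raising operator of the tensor product crystal `B₁ ⊗ B₂`:
`e_i(b₁ ⊗ b₂) = e_i b₁ ⊗ b₂` if `φ_i(b₁) ≥ ε_i(b₂)`, else `b₁ ⊗ e_i b₂`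
(with `0 ⊗ b₂ = b₁ ⊗ 0 = 0`). -/
def tensorE {I P : Type*} [AddCommGroup P] {α : I → P} {pair : I → P →+ ℤ}
    {B1 B2 : Type*} (C1 : SNCrystal I P α pair B1) (C2 : SNCrystal I P α pair B2)
    (i : I) (b : B1 × B2) : Option (B1 × B2) :=
  if C2.eps i b.2 ≤ C1.phi i b.1 then (C1.e i b.1).map (fun x => (x, b.2))
  else (C2.e i b.2).map (fun x => (b.1, x))

/-- The lowering operator of the tensor product crystal `B₁ ⊗ B₂`:
`f_i(b₁ ⊗ b₂) = f_i b₁ ⊗ b₂` if `φ_i(b₁) > ε_i(b₂)`, else `b₁ ⊗ f_i b₂`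
(with `0 ⊗ b₂ = b₁ ⊗ 0 = 0`). -/
def tensorF {I P : Type*} [AddCommGroup P] {α : I → P} {pair : I → P →+ ℤ}
    {B1 B2 : Type*} (C1 : SNCrystal I P α pair B1) (C2 : SNCrystal I P α pair B2)
    (i : I) (b : B1 × B2) : Option (B1 × B2) :=
  if C2.eps i b.2 < C1.phi i b.1 then (C1.f i b.1).map (fun x => (x, b.2))
  else (C2.f i b.2).map (fun x => (b.1, x))

/-- `T` is the tensor product crystal `C1 ⊗ C2` on the set `B1 × B2`:
its weight map and crystal operators are given by the tensor product rule. -/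
def IsTensor {I P : Type*} [AddCommGroup P] {α : I → P} {pair : I → P →+ ℤ}
    {B1 B2 : Type*} (C1 : SNCrystal I P α pair B1) (C2 : SNCrystal I P α pair B2)
    (T : SNCrystal I P α pair (B1 × B2)) : Prop :=
  (∀ b : B1 × B2, T.wt b = C1.wt b.1 + C2.wt b.2) ∧
  (∀ (i : I) (b : B1 × B2), T.e i b = tensorE C1 C2 i b) ∧
  (∀ (i : I) (b : B1 × B2), T.f i b = tensorF C1 C2 i b)

/-- `F_i S = {f_i^k b ∣ b ∈ S, k ≥ 0} \ {0}`. -/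
def Fset {I P : Type*} [AddCommGroup P] {α : I → P} {pair : I → P →+ ℤ}
    {B : Type*} (C : SNCrystal I P α pair B) (i : I) (S : Set B) : Set B :=
  {b | ∃ s ∈ S, ∃ k : ℕ, optIter (C.f i) k (some s) = some b}

/-- `F_{j₁} ⋯ F_{j_m} S` for a word `[j₁, …, j_m]` (the rightmost letter acts first). -/
def Fword {I P : Type*} [AddCommGroup P] {α : I → P} {pair : I → P →+ ℤ}
    {B : Type*} (C : SNCrystal I P α pair B) (w : List I) (S : Set B) : Set B :=
  w.foldr (Fset C) S

/-- The monomial `f_{j₁}^{d₁} ⋯ f_{j_m}^{d_m}` applied to an element of `B ⊔ {0}`,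
given the list of pairs `[(j₁,d₁), …, (j_m,d_m)]` (the rightmost factor acts first). -/
def monomial {I P : Type*} [AddCommGroup P] {α : I → P} {pair : I → P →+ ℤ}
    {B : Type*} (C : SNCrystal I P α pair B) : List (I × ℕ) → Option B → Option B
  | [], x => x
  | p :: rest, x => optIter (C.f p.1) p.2 (monomial C rest x)

/-!
Along the word, every element `u ⊗ z'` reached in `A ⊗ Z` stays in a set that is closed under
`f_j` and whose first factor is constantly `u`. Hence `φ_j(u) ≤ ε_j(z')`: otherwise `f_j` would
act on the first factor and change `u`. Since `ε_j(z') ≤ ε_j(z' ⊗ c')` in `Z ⊗ C`, the tensor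
rule then lets `f_j` act on the second factor of `u ⊗ (z' ⊗ c')`, and the `Z`-factor of the
result is either `z'` or `f_j z'`, so it again lies in the invariant set.
-/

section OptIter

variable {B : Type*}

theorem optIter_eq_iterate (g : B → Option B) (n : ℕ) :
    optIter g n = (Option.bind · g)^[n] := by
  induction n with
  | zero => rfl
  | succ n ih => funext x; rw [Function.iterate_succ_apply', ← ih]; rfl

theorem optIter_none (g : B → Option B) (n : ℕ) : optIter g n none = none := by
  rw [optIter_eq_iterate]; exact Function.iterate_fixed rfl n

theorem optIter_succ_some (g : B → Option B) (n : ℕ) (b : B) :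
    optIter g (n + 1) (some b) = optIter g n (g b) := by
  rw [optIter_eq_iterate, Function.iterate_succ_apply, ← optIter_eq_iterate]; rfl

theorem optIter_eq_none_of_le {g : B → Option B} {m n : ℕ} {x : Option B}
    (h : optIter g m x = none) (hmn : m ≤ n) : optIter g n x = none := by
  obtain ⟨k, rfl⟩ := Nat.exists_eq_add_of_le hmn
  rw [optIter_eq_iterate] at h ⊢
  rw [Nat.add_comm, Function.iterate_add_apply, h]
  exact Function.iterate_fixed rfl k

theorem optIter_of_apply_eq_self {g : B → Option B} {b : B} (h : g b = some b) (n : ℕ) :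
    optIter g n (some b) = some b := by
  rw [optIter_eq_iterate]; exact Function.iterate_fixed h n

theorem exists_apply_eq_some_of_optIter_ne_none {g : B → Option B} {n : ℕ} {b : B}
    (h : optIter g (n + 1) (some b) ≠ none) : ∃ b', g b = some b' := by
  rw [optIter_succ_some] at h
  exact Option.ne_none_iff_exists'.mp fun hg => h (by rw [hg, optIter_none])

theorem optIter_map_of_invariant {B' : Type*} {g : B → Option B} {h : B' → Option B'}
    {φ : B' → B} {Q : B' → Prop}
    (hstep : ∀ y, Q y → g (φ y) = (h y).map φ ∧ ∀ y' ∈ h y, Q y')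
    (n : ℕ) {o : Option B'} (ho : ∀ y ∈ o, Q y) :
    optIter g n (o.map φ) = (optIter h n o).map φ ∧ ∀ y ∈ optIter h n o, Q y := by
  induction n with
  | zero => exact ⟨rfl, ho⟩
  | succ n ih =>
    obtain ⟨ih_eq, ih_inv⟩ := ih
    simp only [optIter, ih_eq]
    cases hy : optIter h n o with
    | none => exact ⟨rfl, fun _ h => by simp at h⟩
    | some y => exact hstep y (ih_inv y hy)

end OptIter

section Crystal

variable {I P : Type*} [AddCommGroup P] {α : I → P} {pair : I → P →+ ℤ}

namespace SNCrystal

variable {B : Type*} (C : SNCrystal I P α pair B) {i : I}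

theorem le_eps_of_optIter_ne_none {b : B} {k : ℕ} (h : optIter (C.e i) k (some b) ≠ none) :
    k ≤ C.eps i b := by
  by_contra hk
  exact h (optIter_eq_none_of_le (C.eps_max i b) (by omega))

theorem exists_e_eq_some_of_eps_pos {b : B} (h : 0 < C.eps i b) : ∃ b', C.e i b = some b' := by
  obtain ⟨k, hk⟩ := Nat.exists_eq_add_of_lt h
  exact exists_apply_eq_some_of_optIter_ne_none (hk ▸ C.eps_spec i b)

theorem exists_f_eq_some_of_phi_pos {b : B} (h : 0 < C.phi i b) : ∃ b', C.f i b = some b' := by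
  obtain ⟨k, hk⟩ := Nat.exists_eq_add_of_lt h
  exact exists_apply_eq_some_of_optIter_ne_none (hk ▸ C.phi_spec i b)

theorem eps_le_eps_add_one_of_e_eq_some {b b' : B} (h : C.e i b = some b') :
    C.eps i b ≤ C.eps i b' + 1 := by
  rcases hb : C.eps i b with _ | k
  · omega
  · have hk := C.eps_spec i b
    rw [hb, optIter_succ_some, h] at hk
    exact Nat.succ_le_succ (C.le_eps_of_optIter_ne_none hk)

theorem f_ne_self (b : B) : C.f i b ≠ some b := fun h => by
  simpa [optIter_of_apply_eq_self h] using C.phi_max i b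

theorem mem_Fset_of_f_eq_some {S : Set B} {b b' : B} (hb : b ∈ Fset C i S)
    (h : C.f i b = some b') : b' ∈ Fset C i S := by
  obtain ⟨s, hs, k, hk⟩ := hb
  exact ⟨s, hs, k + 1, by rw [optIter, hk, Option.bind_some, h]⟩

end SNCrystal

section Tensor

variable {B₁ B₂ : Type*} {C₁ : SNCrystal I P α pair B₁} {C₂ : SNCrystal I P α pair B₂}
  {T : SNCrystal I P α pair (B₁ × B₂)} {i : I}

theorem tensorF_of_phi_le_eps {b : B₁ × B₂} (h : C₁.phi i b.1 ≤ C₂.eps i b.2) :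
    tensorF C₁ C₂ i b = (C₂.f i b.2).map (b.1, ·) := by
  simp [tensorF, not_lt.mpr h]

theorem tensorF_of_eps_lt_phi {b : B₁ × B₂} (h : C₂.eps i b.2 < C₁.phi i b.1) :
    tensorF C₁ C₂ i b = (C₁.f i b.1).map (·, b.2) := by
  simp [tensorF, h]

theorem fst_eq_or_f_eq_some_of_tensorF_eq_some {b b' : B₁ × B₂}
    (h : tensorF C₁ C₂ i b = some b') : b'.1 = b.1 ∨ C₁.f i b.1 = some b'.1 := by
  unfold tensorF at h
  split_ifs at h
  · obtain ⟨x, hx, rfl⟩ := Option.map_eq_some_iff.mp h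
    exact Or.inr hx
  · obtain ⟨x, -, rfl⟩ := Option.map_eq_some_iff.mp h
    exact Or.inl rfl

namespace IsTensor

theorem eps_fst_le (hT : IsTensor C₁ C₂ T) (b : B₁ × B₂) : C₁.eps i b.1 ≤ T.eps i b := by
  suffices ∀ n b₁ b₂, n ≤ C₁.eps i b₁ → optIter (T.e i) n (some (b₁, b₂)) ≠ none from
    T.le_eps_of_optIter_ne_none (this _ b.1 b.2 le_rfl)
  intro n
  induction n with
  | zero => simp [optIter]
  | succ n ih =>
    intro b₁ b₂ hn
    rw [optIter_succ_some, hT.2.1]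
    simp only [tensorE]
    split_ifs with hle
    · obtain ⟨b₁', hb₁'⟩ := C₁.exists_e_eq_some_of_eps_pos (i := i) (b := b₁) (by omega)
      have := C₁.eps_le_eps_add_one_of_e_eq_some hb₁'
      simpa [hb₁'] using ih b₁' b₂ (by omega)
    · obtain ⟨b₂', hb₂'⟩ := C₂.exists_e_eq_some_of_eps_pos (i := i) (b := b₂) (by omega)
      simpa [hb₂'] using ih b₁ b₂' (by omega)

theorem f_of_phi_le_eps (hT : IsTensor C₁ C₂ T) {b : B₁ × B₂} (h : C₁.phi i b.1 ≤ C₂.eps i b.2) :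
    T.f i b = (C₂.f i b.2).map (b.1, ·) := by
  rw [hT.2.2, tensorF_of_phi_le_eps h]

theorem phi_le_eps_of_mem_Fset (hT : IsTensor C₁ C₂ T) {u : B₁} {S : Set (B₁ × B₂)}
    (hS : Fset T i S ⊆ {p | p.1 = u}) {b : B₂} (hb : (u, b) ∈ Fset T i S) :
    C₁.phi i u ≤ C₂.eps i b := by
  by_contra! hlt
  obtain ⟨u', hu'⟩ := C₁.exists_f_eq_some_of_phi_pos (i := i) (b := u) (by omega)
  have hf : T.f i (u, b) = some (u', b) := by
    rw [hT.2.2, tensorF_of_eps_lt_phi hlt, hu']; rfl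
  have hu : u' = u := hS (T.mem_Fset_of_f_eq_some hb hf)
  exact C₁.f_ne_self u (hu ▸ hu')

end IsTensor

end Tensor

section Associativity

variable {A Z C : Type*} {CA : SNCrystal I P α pair A} {CZ : SNCrystal I P α pair Z}
  {CC : SNCrystal I P α pair C}
  {TAZ : SNCrystal I P α pair (A × Z)} {TZC : SNCrystal I P α pair (Z × C)}
  {T : SNCrystal I P α pair (A × (Z × C))} {u : A}

theorem f_tensor_eq_map_of_mem_Fset (hTAZ : IsTensor CA CZ TAZ) (hTZC : IsTensor CZ CC TZC)
    (hT : IsTensor CA TZC T) {j : I} {S : Set (A × Z)}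
    (hS : Fset TAZ j S ⊆ {p | p.1 = u}) {y : Z × C} (hy : (u, y.1) ∈ Fset TAZ j S) :
    T.f j (u, y) = (TZC.f j y).map (u, ·) ∧ ∀ y' ∈ TZC.f j y, (u, y'.1) ∈ Fset TAZ j S := by
  have hle : CA.phi j u ≤ CZ.eps j y.1 := hTAZ.phi_le_eps_of_mem_Fset hS hy
  refine ⟨hT.f_of_phi_le_eps (hle.trans (hTZC.eps_fst_le y)), fun y' hy' => ?_⟩
  rw [hTZC.2.2] at hy'
  rcases fst_eq_or_f_eq_some_of_tensorF_eq_some hy' with h | h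
  · rwa [h]
  · refine TAZ.mem_Fset_of_f_eq_some hy ?_
    rw [hTAZ.f_of_phi_le_eps hle]
    simp [h]

theorem monomial_tensor_eq_map (hTAZ : IsTensor CA CZ TAZ) (hTZC : IsTensor CZ CC TZC)
    (hT : IsTensor CA TZC T) {z : Z} (c : C) (ws : List (I × ℕ))
    (hF : Fword TAZ (ws.map Prod.fst) {(u, z)} ⊆ {p | p.1 = u}) :
    monomial T ws (some (u, (z, c))) = (monomial TZC ws (some (z, c))).map (u, ·) ∧
      ∀ y ∈ monomial TZC ws (some (z, c)), (u, y.1) ∈ Fword TAZ (ws.map Prod.fst) {(u, z)} := by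
  induction ws with
  | nil =>
    refine ⟨rfl, fun y hy => ?_⟩
    obtain rfl : (z, c) = y := Option.some_inj.mp hy
    rfl
  | cons w ws ih =>
    have hsub : Fword TAZ (ws.map Prod.fst) {(u, z)} ⊆
        Fword TAZ ((w :: ws).map Prod.fst) {(u, z)} := fun p hp => ⟨p, hp, 0, rfl⟩
    obtain ⟨ih_eq, ih_mem⟩ := ih (hsub.trans hF)
    simp only [monomial, ih_eq]
    exact optIter_map_of_invariant (fun y hy => f_tensor_eq_map_of_mem_Fset hTAZ hTZC hT hF hy)
      w.2 fun y hy => hsub (ih_mem y hy)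

end Associativity

end Crystal

/-- abstract form of Lemma "tsr help 2". Let `A`, `Z`, `C` be seminormal
crystals, `u ∈ A`, `z ∈ Z`, and `j₁, …, j_m ∈ I`. If `F_{j₁}⋯F_{j_m}({u ⊗ z}) ⊆ {u} ⊗ Z`
in `A ⊗ Z`, then for every `c ∈ C` and all `d₁, …, d_m ≥ 0`, the monomial
`G = f_{j₁}^{d₁}⋯f_{j_m}^{d_m}` satisfies `G(u ⊗ (z ⊗ c)) = u ⊗ G(z ⊗ c)` in
`A ⊗ (Z ⊗ C)` (with the convention `u ⊗ 0 = 0`). -/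
theorem tsr_help_two {I P : Type*} [AddCommGroup P] {α : I → P} {pair : I → P →+ ℤ}
    {A Z C : Type*} (CA : SNCrystal I P α pair A) (CZ : SNCrystal I P α pair Z)
    (CC : SNCrystal I P α pair C)
    (TAZ : SNCrystal I P α pair (A × Z)) (hTAZ : IsTensor CA CZ TAZ)
    (TZC : SNCrystal I P α pair (Z × C)) (hTZC : IsTensor CZ CC TZC)
    (T : SNCrystal I P α pair (A × (Z × C))) (hT : IsTensor CA TZC T)
    (u : A) (z : Z) (js : List I)
    (hF : Fword TAZ js {(u, z)} ⊆ {p : A × Z | p.1 = u}) :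
    ∀ (c : C) (ds : List ℕ), ds.length = js.length →
      monomial T (js.zip ds) (some (u, (z, c))) =
        (monomial TZC (js.zip ds) (some (z, c))).map (fun y => (u, y)) := by
  intro c ds hlen
  have hword : (js.zip ds).map Prod.fst = js := List.map_fst_zip hlen.ge
  exact (monomial_tensor_eq_map hTAZ hTZC hT c (js.zip ds) (by rwa [hword])).1
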